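/- Convergence theorem: under the mesh condition h < 2D/v and assuming the truncation error bound max_i|R_i^l| ≤ C₁(n^β + h²) with β = -min{2-α, rα}, there exists a constant C independent of n and h such that the scheme errors satisfy ‖e^l‖_∞ ≤ C(n^β + h²) for all 1 ≤ l ≤ n. -/

import Mathlib

/-!
With `B_j = τ_j^(-α) a_{j,l}` the L1 term at level `l` is `∑_{j<l} B_j (e^{j+1} - e^j) / Γ(2-α)`.
Up to the factor `(T/n^r)^(-α)`, `B_j` is a difference quotient of the concave function
`x ↦ x^(1-α)` over `[l^r - (j+1)^r, l^r - j^r]`; these intervals move left as `j` grows, so the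
`B_j` are nondecreasing, and the tangent at `l^r` gives `B_0 ≥ (1-α) T^(-α)`. At a grid point where
`|e^l|` is maximal, the cell-Péclet condition `h < 2D/v` makes the signed advection-diffusion term
nonnegative, so the signed error `u` satisfies `∑_{j<l} B_j (u_{j+1} - u_j) ≤ Γ(2-α) |R^l|`.
Summation by parts turns this into
`B_{l-1} u_l ≤ Γ(2-α) |R^l| + (B_{l-1} - B_0) max_{j<l} ‖e^j‖_∞`, and induction on `l` closes.
-/

noncomputable def gradedCoef (r α : ℝ) (j l : ℕ) : ℝ :=
  (((l : ℝ) ^ r - (j : ℝ) ^ r) / (((j : ℝ) + 1) ^ r - (j : ℝ) ^ r)) ^ (1 - α) -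
  (((l : ℝ) ^ r - ((j : ℝ) + 1) ^ r) / (((j : ℝ) + 1) ^ r - (j : ℝ) ^ r)) ^ (1 - α)

noncomputable def meshPt (r T : ℝ) (n i : ℕ) : ℝ := ((i : ℝ) / (n : ℝ)) ^ r * T

noncomputable def meshStep (r T : ℝ) (n i : ℕ) : ℝ := meshPt r T n (i + 1) - meshPt r T n i

noncomputable def T1op (α r T v D h : ℝ) (n : ℕ) (Y : ℕ → ℕ → ℝ) (i l : ℕ) : ℝ :=
  meshStep r T n (l - 1) ^ (-α) / Real.Gamma (2 - α) * Y i l +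
    v * (Y (i + 1) l - Y (i - 1) l) / (2 * h) -
    D * (Y (i + 1) l - 2 * Y i l + Y (i - 1) l) / h ^ 2

noncomputable def T2op (α r T : ℝ) (n : ℕ) (Y : ℕ → ℕ → ℝ) (i l : ℕ) : ℝ :=
  meshStep r T n (l - 1) ^ (-α) / Real.Gamma (2 - α) * Y i (l - 1) -
    (1 / Real.Gamma (2 - α)) *
      ∑ j ∈ Finset.range (l - 1),
        meshStep r T n j ^ (-α) * gradedCoef r α j l * (Y i (j + 1) - Y i j)

open Finset

noncomputable def l1Weight (α r T : ℝ) (n l j : ℕ) : ℝ :=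
  meshStep r T n j ^ (-α) * gradedCoef r α j l

noncomputable def advDiff (v D h : ℝ) (w : ℕ → ℝ) (i : ℕ) : ℝ :=
  v * (w (i + 1) - w (i - 1)) / (2 * h) - D * (w (i + 1) - 2 * w i + w (i - 1)) / h ^ 2

section Weights

variable {α r T : ℝ} {n : ℕ}

lemma rpow_succ_sub_rpow_pos (hr : 0 < r) (j : ℕ) : 0 < ((j : ℝ) + 1) ^ r - (j : ℝ) ^ r :=
  sub_pos.mpr (Real.rpow_lt_rpow (Nat.cast_nonneg j) (lt_add_one _) hr)

lemma meshStep_eq (hn : 1 ≤ n) (j : ℕ) :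
    meshStep r T n j = T / (n : ℝ) ^ r * (((j : ℝ) + 1) ^ r - (j : ℝ) ^ r) := by
  have hn' : (0 : ℝ) < n := by exact_mod_cast hn
  unfold meshStep meshPt
  push_cast
  rw [Real.div_rpow (by positivity) hn'.le, Real.div_rpow (Nat.cast_nonneg j) hn'.le]
  ring

lemma meshStep_pos (hr : 0 < r) (hT : 0 < T) (hn : 1 ≤ n) (j : ℕ) : 0 < meshStep r T n j := by
  have hn' : (0 : ℝ) < n := by exact_mod_cast hn
  rw [meshStep_eq hn]
  exact mul_pos (by positivity) (rpow_succ_sub_rpow_pos hr j)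

lemma gradedCoef_self_succ (hα : α < 1) (hr : 0 < r) (m : ℕ) :
    gradedCoef r α m (m + 1) = 1 := by
  rw [gradedCoef, Nat.cast_succ, div_self (rpow_succ_sub_rpow_pos hr m).ne', sub_self, zero_div,
    Real.one_rpow, Real.zero_rpow (by linarith), sub_zero]

lemma l1Weight_self_succ (hα : α < 1) (hr : 0 < r) (m : ℕ) :
    l1Weight α r T n (m + 1) m = meshStep r T n m ^ (-α) := by
  rw [l1Weight, gradedCoef_self_succ hα hr, mul_one]

lemma l1Weight_eq_slope (hr : 0 < r) (hT : 0 ≤ T) (hn : 1 ≤ n) {l j : ℕ} (hjl : j + 1 ≤ l) :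
    l1Weight α r T n l j = (T / (n : ℝ) ^ r) ^ (-α) *
      slope (fun x : ℝ => x ^ (1 - α))
        ((l : ℝ) ^ r - ((j : ℝ) + 1) ^ r) ((l : ℝ) ^ r - (j : ℝ) ^ r) := by
  set δ := ((j : ℝ) + 1) ^ r - (j : ℝ) ^ r with hδ_def
  have hδ : 0 < δ := rpow_succ_sub_rpow_pos hr j
  have hjl' : (j : ℝ) + 1 ≤ l := by exact_mod_cast hjl
  have hnear : 0 ≤ (l : ℝ) ^ r - ((j : ℝ) + 1) ^ r :=
    sub_nonneg.mpr (Real.rpow_le_rpow (by positivity) hjl' hr.le)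
  have hfar : 0 ≤ (l : ℝ) ^ r - (j : ℝ) ^ r := by linarith
  have hδα : δ ^ (-α) = δ ^ (1 - α) / δ := by
    rw [show -α = (1 - α) - 1 by ring, Real.rpow_sub hδ, Real.rpow_one]
  have hδpos : 0 < δ ^ (1 - α) := Real.rpow_pos_of_pos hδ _
  rw [l1Weight, gradedCoef, meshStep_eq hn, ← hδ_def, Real.mul_rpow (by positivity) hδ.le,
    Real.div_rpow hfar hδ.le, Real.div_rpow hnear hδ.le, hδα, slope_def_field,
    show (l : ℝ) ^ r - (j : ℝ) ^ r - ((l : ℝ) ^ r - ((j : ℝ) + 1) ^ r) = δ by ring]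
  field_simp

lemma l1Weight_le_l1Weight_succ (hα0 : 0 ≤ α) (hα1 : α ≤ 1) (hr : 0 < r) (hT : 0 ≤ T)
    (hn : 1 ≤ n) {l j : ℕ} (hjl : j + 2 ≤ l) :
    l1Weight α r T n l j ≤ l1Weight α r T n l (j + 1) := by
  rw [l1Weight_eq_slope hr hT hn (by omega), l1Weight_eq_slope hr hT hn (by omega)]
  refine mul_le_mul_of_nonneg_left ?_ (by positivity)
  have hjl' : (j : ℝ) + 2 ≤ l := by exact_mod_cast hjl
  have h01 : (j : ℝ) ^ r < ((j : ℝ) + 1) ^ r := by linarith [rpow_succ_sub_rpow_pos hr j]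
  have h12 : ((j : ℝ) + 1) ^ r < ((j : ℝ) + 2) ^ r := by
    simpa [add_assoc, one_add_one_eq_two] using rpow_succ_sub_rpow_pos hr (j + 1)
  have h2l : ((j : ℝ) + 2) ^ r ≤ (l : ℝ) ^ r := Real.rpow_le_rpow (by positivity) hjl' hr.le
  simp only [slope_def_field, Nat.cast_succ, add_assoc, one_add_one_eq_two]
  exact (Real.concaveOn_rpow (by linarith) (by linarith)).slope_anti_adjacent
    (Set.mem_Ici.mpr (by linarith)) (Set.mem_Ici.mpr (by linarith)) (by linarith) (by linarith)

lemma l1Weight_zero_ge (hα0 : 0 ≤ α) (hα1 : α ≤ 1) (hr : 0 < r) (hT : 0 < T) {l : ℕ}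
    (hl : 1 ≤ l) (hln : l ≤ n) : (1 - α) * T ^ (-α) ≤ l1Weight α r T n l 0 := by
  have hn : 1 ≤ n := hl.trans hln
  have hn' : (0 : ℝ) < n := by exact_mod_cast hn
  have hlr : 1 ≤ (l : ℝ) ^ r := Real.one_le_rpow (by exact_mod_cast hl) hr.le
  have hlnr : (l : ℝ) ^ r ≤ (n : ℝ) ^ r :=
    Real.rpow_le_rpow (by positivity) (by exact_mod_cast hln) hr.le
  rw [l1Weight_eq_slope hr hT.le hn (by omega)]
  simp only [Nat.cast_zero, zero_add, Real.one_rpow, Real.zero_rpow hr.ne', sub_zero]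
  have htangent :=
    (Real.concaveOn_rpow (p := 1 - α) (by linarith) (by linarith)).le_slope_of_hasDerivAt
      (Set.mem_Ici.mpr (by linarith)) (Set.mem_Ici.mpr (by linarith)) (sub_one_lt _)
      (Real.hasDerivAt_rpow_const (x := (l : ℝ) ^ r) (Or.inl (by positivity)))
  have hscale : T ^ (-α) ≤ (T / (n : ℝ) ^ r) ^ (-α) * ((l : ℝ) ^ r) ^ (1 - α - 1) := by
    rw [sub_sub_cancel_left, ← Real.mul_rpow (by positivity) (by positivity)]
    refine Real.rpow_le_rpow_of_nonpos (by positivity) ?_ (by linarith)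
    rw [div_mul_eq_mul_div, div_le_iff₀ (by positivity)]
    exact mul_le_mul_of_nonneg_left hlnr hT.le
  calc (1 - α) * T ^ (-α)
      ≤ (1 - α) * ((T / (n : ℝ) ^ r) ^ (-α) * ((l : ℝ) ^ r) ^ (1 - α - 1)) :=
        mul_le_mul_of_nonneg_left hscale (by linarith)
    _ = (T / (n : ℝ) ^ r) ^ (-α) * ((1 - α) * ((l : ℝ) ^ r) ^ (1 - α - 1)) := by ring
    _ ≤ _ := mul_le_mul_of_nonneg_left htangent (by positivity)

end Weights

lemma T1op_sub_T2op (α r T v D h : ℝ) (hα : α < 1) (hr : 0 < r) (n : ℕ)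
    (Y : ℕ → ℕ → ℝ) (i m : ℕ) :
    T1op α r T v D h n Y i (m + 1) - T2op α r T n Y i (m + 1) =
      (∑ j ∈ range (m + 1), l1Weight α r T n (m + 1) j * (Y i (j + 1) - Y i j)) /
        Real.Gamma (2 - α) + advDiff v D h (fun k => Y k (m + 1)) i := by
  rw [sum_range_succ, l1Weight_self_succ hα hr]
  simp only [T1op, T2op, advDiff, l1Weight, Nat.add_sub_cancel]
  ring

lemma advDiff_const_mul (v D h c : ℝ) (w : ℕ → ℝ) (i : ℕ) :
    advDiff v D h (fun k => c * w k) i = c * advDiff v D h w i := by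
  simp only [advDiff]
  ring

lemma advDiff_nonneg_of_le {v D h : ℝ} (hv : 0 < v) (hh : 0 < h) (hcell : h < 2 * D / v)
    {w : ℕ → ℝ} {i : ℕ} (hright : w (i + 1) ≤ w i) (hleft : w (i - 1) ≤ w i) :
    0 ≤ advDiff v D h w i := by
  have hcoef : v / (2 * h) ≤ D / h ^ 2 := by
    rw [div_le_div_iff₀ (by positivity) (by positivity)]
    rw [lt_div_iff₀ hv] at hcell
    nlinarith
  have hsplit : advDiff v D h w i = (D / h ^ 2 - v / (2 * h)) * (w i - w (i + 1)) +
      (D / h ^ 2 + v / (2 * h)) * (w i - w (i - 1)) := by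
    simp only [advDiff]
    ring
  have hconv : 0 ≤ v / (2 * h) := by positivity
  rw [hsplit]
  exact add_nonneg (mul_nonneg (by linarith) (by linarith))
    (mul_nonneg (by linarith) (by linarith))

lemma le_of_monotone_weighted_sum_le {B u : ℕ → ℝ} {m : ℕ} {M g : ℝ}
    (hB : ∀ j < m, B j ≤ B (j + 1)) (hBm : 0 < B m) (hu0 : u 0 = 0)
    (hu : ∀ j < m, u (j + 1) ≤ M)
    (hsum : ∑ j ∈ range (m + 1), B j * (u (j + 1) - u j) ≤ g) (hg : g ≤ B 0 * M) :
    u (m + 1) ≤ M := by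
  have habel : ∑ j ∈ range (m + 1), B j * (u (j + 1) - u j) =
      B m * u (m + 1) - ∑ j ∈ range m, (B (j + 1) - B j) * u (j + 1) := by
    simpa only [smul_eq_mul, Nat.add_sub_cancel, sum_range_sub, hu0, sub_zero] using
      sum_range_by_parts B (fun j => u (j + 1) - u j) (m + 1)
  have hhistory : ∑ j ∈ range m, (B (j + 1) - B j) * u (j + 1) ≤ (B m - B 0) * M :=
    calc ∑ j ∈ range m, (B (j + 1) - B j) * u (j + 1)
        ≤ ∑ j ∈ range m, (B (j + 1) - B j) * M := by
          refine sum_le_sum fun j hj => ?_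
          have hj := mem_range.mp hj
          exact mul_le_mul_of_nonneg_left (hu j hj) (by linarith [hB j hj])
      _ = (B m - B 0) * M := by rw [← sum_mul, sum_range_sub]
  refine le_of_mul_le_mul_left ?_ hBm
  linarith

lemma exists_mul_eq_abs_and_mul_le_abs (x : ℝ) :
    ∃ ε : ℝ, ε * x = |x| ∧ ∀ y, ε * y ≤ |y| := by
  rcases le_or_gt 0 x with hx | hx
  · exact ⟨1, by rw [one_mul, abs_of_nonneg hx], fun y => by rw [one_mul]; exact le_abs_self y⟩
  · exact ⟨-1, by rw [neg_one_mul, abs_of_neg hx],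
      fun y => by rw [neg_one_mul]; exact neg_le_abs y⟩

lemma exists_abs_max_on_grid (f : ℕ → ℝ) (K : ℕ) :
    ∃ i₀ ≤ K, ∀ i ≤ K, |f i| ≤ |f i₀| := by
  obtain ⟨i₀, hi₀, hmax⟩ := exists_max_image (range (K + 1)) (fun i => |f i|)
    nonempty_range_add_one
  exact ⟨i₀, Nat.lt_succ_iff.mp (mem_range.mp hi₀),
    fun i hi => hmax i (mem_range.mpr (Nat.lt_succ_of_le hi))⟩

section Step

variable {α r T v D h : ℝ} {n K : ℕ} {e R : ℕ → ℕ → ℝ} {m : ℕ} {g : ℝ}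

lemma l1Sum_signed_le_of_isMax (hα1 : α < 1) (hr : 0 < r) (hv : 0 < v) (hh : 0 < h)
    (hcell : h < 2 * D / v) {i₀ : ℕ} (hi₀ : 1 ≤ i₀) (hi₀K : i₀ ≤ K - 1)
    (hmax : ∀ i ≤ K, |e i (m + 1)| ≤ |e i₀ (m + 1)|) {ε : ℝ}
    (hε : ε * e i₀ (m + 1) = |e i₀ (m + 1)|) (hεle : ∀ y, ε * y ≤ |y|)
    (hsch : T1op α r T v D h n e i₀ (m + 1) = T2op α r T n e i₀ (m + 1) + R i₀ (m + 1))
    (hR : |R i₀ (m + 1)| ≤ g) :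
    ∑ j ∈ range (m + 1), l1Weight α r T n (m + 1) j * (ε * e i₀ (j + 1) - ε * e i₀ j)
      ≤ Real.Gamma (2 - α) * g := by
  have hΓ : 0 < Real.Gamma (2 - α) := Real.Gamma_pos_of_pos (by linarith)
  have hadv : 0 ≤ ε * advDiff v D h (fun k => e k (m + 1)) i₀ := by
    rw [← advDiff_const_mul]
    exact advDiff_nonneg_of_le hv hh hcell
      (by rw [hε]; exact (hεle _).trans (hmax _ (by omega)))
      (by rw [hε]; exact (hεle _).trans (hmax _ (by omega)))
  have hstep := T1op_sub_T2op α r T v D h hα1 hr n e i₀ m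
  rw [hsch, add_sub_cancel_left] at hstep
  calc ∑ j ∈ range (m + 1), l1Weight α r T n (m + 1) j * (ε * e i₀ (j + 1) - ε * e i₀ j)
      = ε * ∑ j ∈ range (m + 1),
          l1Weight α r T n (m + 1) j * (e i₀ (j + 1) - e i₀ j) := by
        rw [mul_sum]
        exact sum_congr rfl fun j _ => by ring
    _ = Real.Gamma (2 - α) *
        (ε * R i₀ (m + 1) - ε * advDiff v D h (fun k => e k (m + 1)) i₀) := by
        rw [hstep]
        field_simp
        ring
    _ ≤ Real.Gamma (2 - α) * g :=
        mul_le_mul_of_nonneg_left (by linarith [(hεle _).trans hR]) hΓ.le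

lemma abs_le_of_scheme_step (hα0 : 0 ≤ α) (hα1 : α < 1) (hr : 0 < r) (hT : 0 < T)
    (hn : 1 ≤ n) (hv : 0 < v) (hh : 0 < h) (hcell : h < 2 * D / v) {M : ℝ} (hM : 0 ≤ M)
    (he0 : ∀ i, e i 0 = 0) (hprev : ∀ j ≤ m, ∀ i ≤ K, |e i j| ≤ M)
    (hbdy : e 0 (m + 1) = 0 ∧ e K (m + 1) = 0)
    (hsch : ∀ i, 1 ≤ i → i ≤ K - 1 →
      T1op α r T v D h n e i (m + 1) = T2op α r T n e i (m + 1) + R i (m + 1))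
    (hR : ∀ i, 1 ≤ i → i ≤ K - 1 → |R i (m + 1)| ≤ g)
    (hg : Real.Gamma (2 - α) * g ≤ l1Weight α r T n (m + 1) 0 * M) :
    ∀ i ≤ K, |e i (m + 1)| ≤ M := by
  obtain ⟨i₀, hi₀, hmax⟩ := exists_abs_max_on_grid (fun i => e i (m + 1)) K
  intro i hi
  refine (hmax i hi).trans ?_
  by_cases hbd : i₀ = 0 ∨ i₀ = K
  · rcases hbd with rfl | rfl <;> simpa [hbdy] using hM
  obtain ⟨ε, hε, hεle⟩ := exists_mul_eq_abs_and_mul_le_abs (e i₀ (m + 1))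
  have hsum := l1Sum_signed_le_of_isMax hα1 hr hv hh hcell (by omega) (by omega) hmax hε hεle
    (hsch i₀ (by omega) (by omega)) (hR i₀ (by omega) (by omega))
  rw [← hε]
  exact le_of_monotone_weighted_sum_le (B := l1Weight α r T n (m + 1))
    (u := fun j => ε * e i₀ j)
    (fun j hj => l1Weight_le_l1Weight_succ hα0 hα1.le hr hT.le hn (by omega))
    (by rw [l1Weight_self_succ hα1 hr]; exact Real.rpow_pos_of_pos (meshStep_pos hr hT hn m) _)
    (by simp only [he0, mul_zero])
    (fun j hj => (hεle _).trans (hprev (j + 1) hj i₀ hi₀)) hsum hg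

lemma abs_le_of_residual_le (hα0 : 0 ≤ α) (hα1 : α < 1) (hr : 0 < r) (hT : 0 < T)
    (hv : 0 < v) (hh : 0 < h) (hcell : h < 2 * D / v) (hg : 0 ≤ g) (he0 : ∀ i, e i 0 = 0)
    (hbdy : ∀ l ≤ n, e 0 l = 0 ∧ e K l = 0)
    (hsch : ∀ l, 1 ≤ l → l ≤ n → ∀ i, 1 ≤ i → i ≤ K - 1 →
      T1op α r T v D h n e i l = T2op α r T n e i l + R i l)
    (hR : ∀ l, 1 ≤ l → l ≤ n → ∀ i, 1 ≤ i → i ≤ K - 1 → |R i l| ≤ g) :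
    ∀ l ≤ n, ∀ i ≤ K, |e i l| ≤ Real.Gamma (2 - α) * T ^ α / (1 - α) * g := by
  have h1α : 0 < 1 - α := by linarith
  have hΓ : 0 < Real.Gamma (2 - α) := Real.Gamma_pos_of_pos (by linarith)
  have hM : 0 ≤ Real.Gamma (2 - α) * T ^ α / (1 - α) * g := by positivity
  have hweight : ∀ l, 1 ≤ l → l ≤ n → Real.Gamma (2 - α) * g ≤
      l1Weight α r T n l 0 * (Real.Gamma (2 - α) * T ^ α / (1 - α) * g) := by
    intro l hl hln
    calc Real.Gamma (2 - α) * g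
        = (1 - α) * T ^ (-α) * (Real.Gamma (2 - α) * T ^ α / (1 - α) * g) := by
          rw [Real.rpow_neg hT.le]
          field_simp
      _ ≤ _ := mul_le_mul_of_nonneg_right (l1Weight_zero_ge hα0 hα1.le hr hT hl hln) hM
  intro l
  induction l using Nat.strong_induction_on with
  | _ l ih =>
    rcases l with _ | m
    · intro _ i _
      simpa [he0] using hM
    · intro hln
      exact abs_le_of_scheme_step hα0 hα1 hr hT (by omega) hv hh hcell hM he0
        (fun j hj => ih j (by omega) (by omega)) (hbdy _ hln) (hsch _ (by omega) hln)
        (hR _ (by omega) hln) (hweight _ (by omega) hln)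

end Step

theorem scheme_convergence_general (α r T v D L C₁ : ℝ) (hα0 : 0 < α) (hα1 : α < 1)
    (hr : 1 ≤ r) (hT : 0 < T) (hv : 0 < v) (hL : 0 < L) (hC₁ : 0 < C₁)
    (β : ℝ) :
    ∃ C : ℝ, 0 < C ∧
      ∀ (n K : ℕ), 1 ≤ n → 2 ≤ K → ∀ h : ℝ, h = L / K → h < 2 * D / v →
        ∀ e R : ℕ → ℕ → ℝ,
          (∀ l, 1 ≤ l → l ≤ n → ∀ i, 1 ≤ i → i ≤ K - 1 →
            |R i l| ≤ C₁ * ((n : ℝ) ^ β + h ^ 2)) →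
          (∀ i, e i 0 = 0) →
          (∀ l, l ≤ n → e 0 l = 0 ∧ e K l = 0) →
          (∀ l, 1 ≤ l → l ≤ n → ∀ i, 1 ≤ i → i ≤ K - 1 →
            T1op α r T v D h n e i l = T2op α r T n e i l + R i l) →
          ∀ l, 1 ≤ l → l ≤ n → ∀ i, 1 ≤ i → i ≤ K - 1 →
            |e i l| ≤ C * ((n : ℝ) ^ β + h ^ 2) := by
  have hΓ : 0 < Real.Gamma (2 - α) := Real.Gamma_pos_of_pos (by linarith)
  refine ⟨Real.Gamma (2 - α) * T ^ α / (1 - α) * C₁,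
    mul_pos (div_pos (by positivity) (by linarith)) hC₁, ?_⟩
  intro n K _ hK h hh hcell e R hR he0 hbdy hsch l _ hln i _ hiK
  have hh0 : 0 < h := by
    rw [hh]
    exact div_pos hL (by exact_mod_cast (by omega : 0 < K))
  rw [mul_assoc]
  exact abs_le_of_residual_le hα0.le hα1 (by linarith) hT hv hh0 hcell (by positivity) he0 hbdy
    hsch hR l hln i (by omega)

/-- Convergence of the implicit L1 graded-mesh scheme: there is a constant `C`
independent of `n` and `h` bounding the scheme error by `C (n^β + h²)`. -/
theorem scheme_convergence (α r T v D L C₁ : ℝ) (hα0 : 0 < α) (hα1 : α < 1)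
    (hr : 1 ≤ r) (hT : 0 < T) (hv : 0 < v) (hD : 0 < D) (hL : 0 < L) (hC₁ : 0 < C₁)
    (β : ℝ) (hβ : β = -min (2 - α) (r * α)) :
    ∃ C : ℝ, 0 < C ∧
      ∀ (n K : ℕ), 1 ≤ n → 2 ≤ K → ∀ h : ℝ, h = L / K → h < 2 * D / v →
        ∀ e R : ℕ → ℕ → ℝ,
          (∀ l, 1 ≤ l → l ≤ n → ∀ i, 1 ≤ i → i ≤ K - 1 →
            |R i l| ≤ C₁ * ((n : ℝ) ^ β + h ^ 2)) →
          (∀ i, e i 0 = 0) →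
          (∀ l, l ≤ n → e 0 l = 0 ∧ e K l = 0) →
          (∀ l, 1 ≤ l → l ≤ n → ∀ i, 1 ≤ i → i ≤ K - 1 →
            T1op α r T v D h n e i l = T2op α r T n e i l + R i l) →
          ∀ l, 1 ≤ l → l ≤ n → ∀ i, 1 ≤ i → i ≤ K - 1 →
            |e i l| ≤ C * ((n : ℝ) ^ β + h ^ 2) :=
  scheme_convergence_general α r T v D L C₁ hα0 hα1 hr hT hv hL hC₁ β
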